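/- arXiv:1807.02708 — 3 statements merged into one kernel-verified Lean document; each statement's English description precedes it below -/
import Mathlib

section
/- Let H be a real inner product space and let p̂₀, q̂₋, q̂₀, q̂₊ ∈ H be such that q̂₀ lies strictly between q̂₋ and q̂₊ (i.e., q̂₀ is in the open segment from q̂₋ to q̂₊, with q̂₀ ≠ q̂₋ and q̂₀ ≠ q̂₊). Let p̃₀, q̃₋, q̃₀, q̃₊ be points of the Euclidean plane ℝ² with q̃₀ strictly between q̃₋ and q̃₊. Assume ‖p̂₀ − q̂₀‖ = ‖p̃₀ − q̃₀‖ ≠ 0, ‖q̂₀ − q̂₋‖ = ‖q̃₀ − q̃₋‖, ‖q̂₀ − q̂₊‖ = ‖q̃₀ − q̃₊‖, ‖p̂₀ − q̂₋‖ ≥ ‖p̃₀ − q̃₋‖ and ‖p̂₀ − q̂₊‖ ≥ ‖p̃₀ − q̃₊‖. Then ∠(p̂₀, q̂₀, q̂₊) = ∠(p̃₀, q̃₀, q̃₊), ∠(p̂₀, q̂₀, q̂₋) = ∠(p̃₀, q̃₀, q̃₋), and moreover ‖p̂₀ − q̂₋‖ = ‖p̃₀ − q̃₋‖ and ‖p̂₀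 − q̂₊‖ = ‖p̃₀ − q̃₊‖. -/
open EuclideanGeometry Real

/-!
At the common vertex the two adjacent angles sum to `π` in both configurations. By the law of
cosines, with the two enclosing sides fixed, the opposite side grows with the angle, so each
inequality `‖p0 - q±‖ ≤ ‖P0 - Q±‖` bounds a model angle by the corresponding angle at `Q0`.
Since both pairs sum to `π`, these bounds are equalities, and SAS then gives the distances.
-/

namespace EuclideanGeometry

variable {V₁ V₂ P₁ P₂ : Type*}
  [NormedAddCommGroup V₁] [NormedAddCommGroup V₂]
  [InnerProductSpace ℝ V₁] [InnerProductSpace ℝ V₂]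
  [MetricSpace P₁] [MetricSpace P₂]
  [NormedAddTorsor V₁ P₁] [NormedAddTorsor V₂ P₂]

theorem angle_le_angle_of_dist_le_dist {a b c : P₁} {a' b' c' : P₂}
    (hab : dist a b = dist a' b') (hbc : dist b c = dist b' c') (ha : a ≠ b) (hc : b ≠ c)
    (h : dist a' c' ≤ dist a c) : ∠ a' b' c' ≤ ∠ a b c := by
  have hpos : 0 < 2 * dist a' b' * dist b' c' := by
    rw [← hab, ← hbc]; have := dist_pos.2 ha; have := dist_pos.2 hc; positivity
  have hcos : cos (∠ a b c) ≤ cos (∠ a' b' c') := by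
    have hsq := mul_self_le_mul_self dist_nonneg h
    rw [law_cos a b c, law_cos a' b' c', hab, dist_comm c b, dist_comm c' b', hbc] at hsq
    exact le_of_mul_le_mul_left (by linarith) hpos
  exact (strictAntiOn_cos.le_iff_ge ⟨angle_nonneg .., angle_le_pi ..⟩
    ⟨angle_nonneg .., angle_le_pi ..⟩).1 hcos

theorem dist_eq_of_angle_eq_of_dist_eq {a b c : P₁} {a' b' c' : P₂}
    (h : ∠ a b c = ∠ a' b' c') (hab : dist a b = dist a' b') (hbc : dist b c = dist b' c') :
    dist a c = dist a' c' :=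
  (side_angle_side h hab hbc).dist_eq 0 2

end EuclideanGeometry

/-- If `Q0` lies strictly between `Qminus` and `Qplus` in a real inner product space `H`,
the model points `q0`, `qminus`, `qplus` in the Euclidean plane are positioned likewise,
the distances from `P0` (resp. `p0`) to `Q0` (resp. `q0`) agree and are nonzero,
the distances `Q0Qminus`, `Q0Qplus` agree with the model ones, and the distances `P0Qminus`,
`P0Qplus` are at least the model ones, then both adjacent angles at `Q0` equal the
model angles and the distances `P0Qminus`, `P0Qplus` equal the model ones. -/
theorem angles_eq_of_sbtw
    {H : Type*} [NormedAddCommGroup H] [InnerProductSpace ℝ H]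
    (P0 Qminus Q0 Qplus : H) (p0 qminus q0 qplus : EuclideanSpace ℝ (Fin 2))
    (hbtw : Sbtw ℝ Qminus Q0 Qplus) (hbtw' : Sbtw ℝ qminus q0 qplus)
    (h0 : ‖P0 - Q0‖ = ‖p0 - q0‖) (h0ne : ‖P0 - Q0‖ ≠ 0)
    (hminus : ‖Q0 - Qminus‖ = ‖q0 - qminus‖)
    (hplus : ‖Q0 - Qplus‖ = ‖q0 - qplus‖)
    (hgeminus : ‖p0 - qminus‖ ≤ ‖P0 - Qminus‖)
    (hgeplus : ‖p0 - qplus‖ ≤ ‖P0 - Qplus‖) :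
    EuclideanGeometry.angle P0 Q0 Qplus = EuclideanGeometry.angle p0 q0 qplus ∧
    EuclideanGeometry.angle P0 Q0 Qminus = EuclideanGeometry.angle p0 q0 qminus ∧
    ‖P0 - Qminus‖ = ‖p0 - qminus‖ ∧ ‖P0 - Qplus‖ = ‖p0 - qplus‖ := by
  simp only [← dist_eq_norm] at *
  have hP0 : P0 ≠ Q0 := dist_ne_zero.1 h0ne
  have hle_plus : ∠ p0 q0 qplus ≤ ∠ P0 Q0 Qplus :=
    angle_le_angle_of_dist_le_dist h0 hplus hP0 hbtw.ne_right hgeplus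
  have hle_minus : ∠ p0 q0 qminus ≤ ∠ P0 Q0 Qminus :=
    angle_le_angle_of_dist_le_dist h0 hminus hP0 hbtw.ne_left hgeminus
  have hsum := angle_add_angle_eq_pi_of_angle_eq_pi P0 hbtw.angle₁₂₃_eq_pi
  have hsum' := angle_add_angle_eq_pi_of_angle_eq_pi p0 hbtw'.angle₁₂₃_eq_pi
  have hplus_eq : ∠ P0 Q0 Qplus = ∠ p0 q0 qplus := by linarith
  have hminus_eq : ∠ P0 Q0 Qminus = ∠ p0 q0 qminus := by linarith
  exact ⟨hplus_eq, hminus_eq, dist_eq_of_angle_eq_of_dist_eq hminus_eq h0 hminus,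
    dist_eq_of_angle_eq_of_dist_eq hplus_eq h0 hplus⟩
end

section
/- Let H be a real inner product space and let p̂₋, p̂₀, q̂₀, q̂₊ ∈ H. Let p̃₋, p̃₀, q̃₀, q̃₊ be points of the Euclidean plane ℝ² with p̃₀ ≠ q̃₀, such that p̃₋ and q̃₊ lie strictly on opposite sides of the line through p̃₀ and q̃₀ (i.e., there is an affine functional f on ℝ² vanishing on that line with f(p̃₋) < 0 < f(q̃₊)). Assume ‖p̂₋ − p̂₀‖ = ‖p̃₋ − p̃₀‖ ≠ 0, ‖p̂₀ − q̂₀‖ = ‖p̃₀ − q̃₀‖, ‖q̂₀ − q̂₊‖ = ‖q̃₀ − q̃₊‖ ≠ 0, ∠(p̂₋, p̂₀, q̂₀) = ∠(p̃₋, p̃₀, q̃₀), ∠(p̂₀, q̂₀, q̂₊) = ∠(p̃₀, q̃₀, q̃₊), and additionally ‖p̂₋ − q̂₊‖ = ‖p̃₋ − q̃₊‖. Then all six pairwise distances agree with the model: ‖p̂₋ − q̂₀‖ = ‖p̃₋ − q̃₀‖ and ‖p̂₀ − q̂₊‖ = ‖p̃₀ − q̃₊‖; moreover the four points p̂₋,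 p̂₀, q̂₀, q̂₊ lie in a common two-dimensional affine subspace of H, with p̂₋ and q̂₊ on opposite sides of the line through p̂₀ and q̂₀. -/
/-!
Side–angle–side at `p̂₀` and at `q̂₀` gives the two missing distances, so the configurations
`p̂₋ p̂₀ q̂₀ q̂₊` and `p̃₋ p̃₀ q̃₀ q̃₊` are congruent. Congruent configurations have the same Gram
matrix of difference vectors, hence satisfy the same linear relations among them. In the plane,
`q̃₊ - p̃₀ = a (p̃₋ - p̃₀) + b (q̃₀ - p̃₀)` with `a < 0` because `p̃₋` and `q̃₊` are separated
by the line `p̃₀ q̃₀`; transported to `H`, this relation spans the plane and yields the separating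
functional.
-/

open EuclideanGeometry
open scoped Congruent RealInnerProductSpace

section Gram

variable {ι E F : Type*} [Fintype ι] [NormedAddCommGroup E] [InnerProductSpace ℝ E]
  [NormedAddCommGroup F] [InnerProductSpace ℝ F]

theorem norm_sum_smul_eq_of_inner_eq {x : ι → E} {y : ι → F}
    (h : ∀ i j, ⟪x i, x j⟫ = ⟪y i, y j⟫) (c : ι → ℝ) :
    ‖∑ i, c i • x i‖ = ‖∑ i, c i • y i‖ := by
  rw [← sq_eq_sq₀ (norm_nonneg _) (norm_nonneg _), ← real_inner_self_eq_norm_sq,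
    ← real_inner_self_eq_norm_sq]
  simp only [sum_inner, inner_sum, real_inner_smul_left, real_inner_smul_right, h]

end Gram

namespace Congruent

variable {ι V₁ V₂ P₁ P₂ : Type*} [NormedAddCommGroup V₁] [NormedAddCommGroup V₂]
  [InnerProductSpace ℝ V₁] [InnerProductSpace ℝ V₂] [MetricSpace P₁] [MetricSpace P₂]
  [NormedAddTorsor V₁ P₁] [NormedAddTorsor V₂ P₂] {v₁ : ι → P₁} {v₂ : ι → P₂}

theorem inner_vsub_vsub_eq (h : v₁ ≅ v₂) (o i j : ι) :
    ⟪v₁ i -ᵥ v₁ o, v₁ j -ᵥ v₁ o⟫ = ⟪v₂ i -ᵥ v₂ o, v₂ j -ᵥ v₂ o⟫ := by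
  simp_rw [real_inner_eq_norm_mul_self_add_norm_mul_self_sub_norm_sub_mul_self_div_two,
    vsub_sub_vsub_cancel_right, ← dist_eq_norm_vsub, h.dist_eq]

theorem sum_smul_vsub_eq_zero_iff [Fintype ι] (h : v₁ ≅ v₂) (o : ι) (c : ι → ℝ) :
    ∑ i, c i • (v₁ i -ᵥ v₁ o) = 0 ↔ ∑ i, c i • (v₂ i -ᵥ v₂ o) = 0 := by
  rw [← norm_eq_zero, norm_sum_smul_eq_of_inner_eq (h.inner_vsub_vsub_eq o), norm_eq_zero]

end Congruent

section Plane

variable {K V : Type*} [Field K] [AddCommGroup V] [Module K V] {o x y z : V}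

theorem linearIndependent_sub_sub_of_affineMap (f : V →ᵃ[K] K) (hne : o ≠ y) (ho : f o = 0)
    (hy : f y = 0) (hx : f x ≠ 0) : LinearIndependent K ![x - o, y - o] := by
  have hf (p : V) : f.linear (p - o) = f p := by
    rw [← vsub_eq_sub, f.linearMap_vsub, ho, vsub_eq_sub, sub_zero]
  rw [LinearIndependent.pair_iff]
  intro s t hst
  have hs : s = 0 := by simpa [hf, hy, hx] using congrArg f.linear hst
  subst hs
  exact ⟨rfl, by simpa [sub_eq_zero, hne.symm] using hst⟩

theorem exists_affineSubspace_finrank_eq_two {a b : K}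
    (hind : LinearIndependent K ![x - o, y - o]) (hz : z - o = a • (x - o) + b • (y - o)) :
    ∃ s : AffineSubspace K V, Module.finrank K s.direction = 2 ∧
      x ∈ s ∧ o ∈ s ∧ y ∈ s ∧ z ∈ s := by
  refine ⟨.mk' o (Submodule.span K {x - o, y - o}), ?_, ?_,
    AffineSubspace.self_mem_mk' _ _, ?_, ?_⟩
  · rw [AffineSubspace.direction_mk', ← Matrix.range_cons_cons_empty, finrank_span_eq_card hind,
      Fintype.card_fin]
  all_goals rw [AffineSubspace.mem_mk', vsub_eq_sub]
  · exact Submodule.subset_span (by simp)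
  · exact Submodule.subset_span (by simp)
  · exact hz ▸ Submodule.mem_span_pair.mpr ⟨a, b, rfl⟩

variable [LinearOrder K] [IsStrictOrderedRing K]

theorem exists_affineMap_neg_pos_of_coeff_neg {a b : K}
    (hind : LinearIndependent K ![x - o, y - o]) (ha : a < 0)
    (hz : z - o = a • (x - o) + b • (y - o)) :
    ∃ g : V →ᵃ[K] K, g o = 0 ∧ g y = 0 ∧ g x < 0 ∧ 0 < g z := by
  have hx : x - o ∉ Submodule.span K {y - o} := by
    rw [Submodule.mem_span_singleton]
    simpa using (linearIndependent_fin2.mp hind).2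
  obtain ⟨ℓ, hℓy, hℓx⟩ := LinearMap.exists_extend_of_notMem 0 hx (-1 : K)
  have hℓy' : ℓ (y - o) = 0 := by
    simpa using LinearMap.congr_fun hℓy ⟨y - o, Submodule.mem_span_singleton_self _⟩
  refine ⟨ℓ.toAffineMap - AffineMap.const K V (ℓ o), ?_, ?_, ?_, ?_⟩
  all_goals simp only [AffineMap.coe_sub, Pi.sub_apply, LinearMap.coe_toAffineMap,
    AffineMap.const_apply, ← map_sub, sub_self]
  · exact hℓy'
  · rw [hℓx]
    exact neg_one_lt_zero
  · rw [hz, map_add, map_smul, map_smul, hℓx, hℓy', smul_eq_mul, smul_eq_mul]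
    linarith

theorem exists_coeff_neg_of_affineMap (hV : Module.finrank K V = 2) (f : V →ᵃ[K] K)
    (hne : o ≠ y) (ho : f o = 0) (hy : f y = 0) (hx : f x < 0) (hz : 0 < f z) :
    ∃ a b : K, a < 0 ∧ z - o = a • (x - o) + b • (y - o) := by
  have hind := linearIndependent_sub_sub_of_affineMap f hne ho hy hx.ne
  have hspan := hind.span_eq_top_of_card_eq_finrank (by rw [Fintype.card_fin, hV])
  have hzmem : z - o ∈ Submodule.span K {x - o, y - o} := by
    rw [← Matrix.range_cons_cons_empty _ _ ![], hspan]
    exact Submodule.mem_top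
  obtain ⟨a, b, hab⟩ := Submodule.mem_span_pair.mp hzmem
  have hf (p : V) : f.linear (p - o) = f p := by
    rw [← vsub_eq_sub, f.linearMap_vsub, ho, vsub_eq_sub, sub_zero]
  have hfz : f z = a * f x := by simpa [hf, hy] using (congrArg f.linear hab).symm
  exact ⟨a, b, by nlinarith, hab.symm⟩

end Plane

theorem rigidity_of_dist_eq_general
    {H : Type*} [NormedAddCommGroup H] [InnerProductSpace ℝ H]
    (Pminus P0 Q0 Qplus : H) (pminus p0 q0 qplus : EuclideanSpace ℝ (Fin 2))
    (hne : p0 ≠ q0)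
    (hside : ∃ f : EuclideanSpace ℝ (Fin 2) →ᵃ[ℝ] ℝ,
      f p0 = 0 ∧ f q0 = 0 ∧ f pminus < 0 ∧ 0 < f qplus)
    (h1 : ‖Pminus - P0‖ = ‖pminus - p0‖)
    (h2 : ‖P0 - Q0‖ = ‖p0 - q0‖)
    (h3 : ‖Q0 - Qplus‖ = ‖q0 - qplus‖)
    (ha1 : EuclideanGeometry.angle Pminus P0 Q0 = EuclideanGeometry.angle pminus p0 q0)
    (ha2 : EuclideanGeometry.angle P0 Q0 Qplus = EuclideanGeometry.angle p0 q0 qplus)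
    (hdiag : ‖Pminus - Qplus‖ = ‖pminus - qplus‖) :
    ‖Pminus - Q0‖ = ‖pminus - q0‖ ∧ ‖P0 - Qplus‖ = ‖p0 - qplus‖ ∧
    (∃ s : AffineSubspace ℝ H, Module.finrank ℝ s.direction = 2 ∧
      Pminus ∈ s ∧ P0 ∈ s ∧ Q0 ∈ s ∧ Qplus ∈ s) ∧
    (∃ g : H →ᵃ[ℝ] ℝ, g P0 = 0 ∧ g Q0 = 0 ∧ g Pminus < 0 ∧ 0 < g Qplus) := by
  simp only [← dist_eq_norm] at h1 h2 h3 hdiag ⊢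
  have hPminusQ0 : dist Pminus Q0 = dist pminus q0 := (side_angle_side ha1 h1 h2).dist_eq 0 2
  have hP0Qplus : dist P0 Qplus = dist p0 qplus := (side_angle_side ha2 h2 h3).dist_eq 0 2
  have hcong : ![Pminus, P0, Q0, Qplus] ≅ ![pminus, p0, q0, qplus] := by
    rw [congruent_iff_dist_eq]
    intro i j
    fin_cases i <;> fin_cases j <;> simp_all [dist_comm]
  obtain ⟨f, hp0, hq0, hpminus, hqplus⟩ := hside
  obtain ⟨a, b, ha, hab⟩ :=
    exists_coeff_neg_of_affineMap finrank_euclideanSpace_fin f hne hp0 hq0 hpminus hqplus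
  have hind : LinearIndependent ℝ ![Pminus - P0, Q0 - P0] := by
    have hind' := linearIndependent_sub_sub_of_affineMap f hne hp0 hq0 hpminus.ne
    rw [LinearIndependent.pair_iff] at hind' ⊢
    intro s t hst
    have h := (hcong.sum_smul_vsub_eq_zero_iff 1 ![s, 0, t, 0]).mp
      (by simpa [Fin.sum_univ_four] using hst)
    exact hind' s t (by simpa [Fin.sum_univ_four] using h)
  have hQplus : Qplus - P0 = a • (Pminus - P0) + b • (Q0 - P0) := by
    have h := (hcong.sum_smul_vsub_eq_zero_iff 1 ![-a, 0, -b, 1]).mpr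
      (by simp [Fin.sum_univ_four, hab]; abel)
    simp only [Fin.sum_univ_four, Matrix.cons_val, vsub_eq_sub, sub_self, smul_zero] at h
    linear_combination (norm := module) h
  exact ⟨hPminusQ0, hP0Qplus, exists_affineSubspace_finrank_eq_two hind hQplus,
    exists_affineMap_neg_pos_of_coeff_neg hind ha hQplus⟩

/-- Rigidity in the equality case: if the broken line `Pminus P0 Q0 Qplus` in a real inner
product space `H` has the same side lengths and the same angles at `P0` and `Q0` as a
model broken line `pminus p0 q0 qplus` in the Euclidean plane whose endpoints lie strictly on
opposite sides of the line through `p0` and `q0`, and moreover `‖Pminus - Qplus‖ = ‖pminus - qplus‖`,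
then all six pairwise distances agree with the model, the four points of `H` lie in a
common two-dimensional affine subspace, and `Pminus`, `Qplus` lie on opposite sides of the
line through `P0` and `Q0`. -/
theorem rigidity_of_dist_eq
    {H : Type*} [NormedAddCommGroup H] [InnerProductSpace ℝ H]
    (Pminus P0 Q0 Qplus : H) (pminus p0 q0 qplus : EuclideanSpace ℝ (Fin 2))
    (hne : p0 ≠ q0)
    (hside : ∃ f : EuclideanSpace ℝ (Fin 2) →ᵃ[ℝ] ℝ,
      f p0 = 0 ∧ f q0 = 0 ∧ f pminus < 0 ∧ 0 < f qplus)
    (h1 : ‖Pminus - P0‖ = ‖pminus - p0‖) (h1ne : ‖Pminus - P0‖ ≠ 0)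
    (h2 : ‖P0 - Q0‖ = ‖p0 - q0‖)
    (h3 : ‖Q0 - Qplus‖ = ‖q0 - qplus‖) (h3ne : ‖Q0 - Qplus‖ ≠ 0)
    (ha1 : EuclideanGeometry.angle Pminus P0 Q0 = EuclideanGeometry.angle pminus p0 q0)
    (ha2 : EuclideanGeometry.angle P0 Q0 Qplus = EuclideanGeometry.angle p0 q0 qplus)
    (hdiag : ‖Pminus - Qplus‖ = ‖pminus - qplus‖) :
    ‖Pminus - Q0‖ = ‖pminus - q0‖ ∧ ‖P0 - Qplus‖ = ‖p0 - qplus‖ ∧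
    (∃ s : AffineSubspace ℝ H, Module.finrank ℝ s.direction = 2 ∧
      Pminus ∈ s ∧ P0 ∈ s ∧ Q0 ∈ s ∧ Qplus ∈ s) ∧
    (∃ g : H →ᵃ[ℝ] ℝ, g P0 = 0 ∧ g Q0 = 0 ∧ g Pminus < 0 ∧ 0 < g Qplus) :=
  rigidity_of_dist_eq_general Pminus P0 Q0 Qplus pminus p0 q0 qplus hne hside h1 h2 h3 ha1 ha2 hdiag
end

section
/- Let p̃, q̃, x̃ be affinely independent points of the Euclidean plane ℝ². Let p̃₀, p̃₊ lie on the segment [p̃, x̃] so that p̃, p̃₀, p̃₊, x̃ appear in this order and are pairwise distinct, and let q̃₀, q̃₊ lie on the segment [q̃, x̃] so that q̃, q̃₀, q̃₊, x̃ appear in this order and are pairwise distinct. Let H be a real Hilbert space and let p̂₋, p̂₀, p̂₊, x̂_p, q̂₋, q̂₀, q̂₊, x̂_q ∈ H; write the model point of p̂₋, p̂₀, p̂₊, x̂_p as p̃, p̃₀, p̃₊, x̃ respectively and of q̂₋, q̂₀, q̂₊, x̂_q as q̃, q̃₀, q̃₊, x̃ respectively. Assume: ‖p̂₀ − q̂₀‖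 = ‖p̃₀ − q̃₀‖; ‖p̂₀ − û‖ equals the distance between the model points of p̂₀ and û for each û ∈ {p̂₋, p̂₊, x̂_p}; ‖q̂₀ − v̂‖ equals the distance between the model points of q̂₀ and v̂ for each v̂ ∈ {q̂₋, q̂₊, x̂_q}; and ‖û − v̂‖ is at least the distance between the corresponding model points for every pair û, v̂ among the eight points. Then ‖û − v̂‖ equals the distance between the corresponding model points for every pair; in particular x̂_p = x̂_q. -/
/-!
Equality in the triangle inequality puts `P0` strictly between `Pminus` and `Pplus` (and `Xp`),
so `Pplus` and `Xp` sit on the line through `Pminus, P0` at the same relative positions as their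
model points, and likewise on the `Q`-side. For `O` strictly between `X` and `Z`, Stewart's
theorem reads `dist Y X ^ 2 * dist Z O + dist Y Z ^ 2 * dist X O = c`, where `c` depends only on
`dist X O`, `dist O Z` and `dist Y O`; as both weights are positive, neither `dist Y X` nor
`dist Y Z` can exceed its model value. Three such applications fix the distances among
`Pminus, P0, Q0, Qminus` not already given. Every one of the eight points is an affine
combination of these four with the same weights as its model point, and the distance between two
affine combinations depends only on the pairwise distances of the points combined.
-/

theorem Wbtw.eq_add_dist_div_dist_smul_sub {V : Type*} [NormedAddCommGroup V] [NormedSpace ℝ V]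
    {x y z : V} (h : Wbtw ℝ x y z) (hxy : x ≠ y) :
    z = y + (dist y z / dist x y) • (y - x) := by
  obtain ⟨s, ⟨hs₀, hs₁⟩, rfl⟩ := h
  have hs : s ≠ 0 := by rintro rfl; simp at hxy
  have hxz : dist x z ≠ 0 := by rintro h; simp_all
  rw [dist_left_lineMap, dist_lineMap_right, AffineMap.lineMap_apply_module,
    Real.norm_of_nonneg hs₀, Real.norm_of_nonneg (sub_nonneg.2 hs₁)]
  match_scalars <;> field_simp <;> ring

theorem sbtw_of_mem_segment_of_mem_segment {V : Type*} [AddCommGroup V] [Module ℝ V]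
    {a b c d : V} (hb : b ∈ segment ℝ a c) (hc : c ∈ segment ℝ b d)
    (hne : [a, b, c, d].Pairwise (· ≠ ·)) : Sbtw ℝ a b c ∧ Sbtw ℝ a b d := by
  obtain ⟨⟨hab, -⟩, ⟨hbc, -⟩, hcd⟩ := by simpa using hne
  have habc : Sbtw ℝ a b c := ⟨mem_segment_iff_wbtw.1 hb, Ne.symm hab, hbc⟩
  exact ⟨habc, habc.trans_expand_left ⟨mem_segment_iff_wbtw.1 hc, Ne.symm hbc, hcd⟩⟩

section StrictConvex

variable {V P : Type*} [NormedAddCommGroup V] [NormedSpace ℝ V] [MetricSpace P]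
  [NormedAddTorsor V P] {W Q : Type*} [NormedAddCommGroup W] [NormedSpace ℝ W]
  [StrictConvexSpace ℝ W] [MetricSpace Q] [NormedAddTorsor W Q]

theorem Sbtw.sbtw_of_dist_eq_of_dist_le {x y z : P} {X Y Z : Q} (h : Sbtw ℝ x y z)
    (hYX : dist Y X = dist y x) (hYZ : dist Y Z = dist y z) (hXZ : dist x z ≤ dist X Z) :
    Sbtw ℝ X Y Z := by
  refine ⟨dist_add_dist_eq_iff.1 (le_antisymm ?_ (dist_triangle _ _ _)), ?_, ?_⟩
  · calc dist X Y + dist Y Z = dist x y + dist y z := by rw [dist_comm X, hYX, hYZ, dist_comm]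
      _ = dist x z := h.wbtw.dist_add_dist
      _ ≤ dist X Z := hXZ
  · rintro rfl
    exact h.ne_left (dist_eq_zero.1 (by rw [← hYX, dist_self]))
  · rintro rfl
    exact h.ne_right (dist_eq_zero.1 (by rw [← hYZ, dist_self]))

theorem Sbtw.exists_eq_add_smul_sub_of_dist_le {x y z : V} {X Y Z : W} (h : Sbtw ℝ x y z)
    (hYX : dist Y X = dist y x) (hYZ : dist Y Z = dist y z) (hXZ : dist x z ≤ dist X Z) :
    ∃ t : ℝ, Z = Y + t • (Y - X) ∧ z = y + t • (y - x) := by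
  have hS := h.sbtw_of_dist_eq_of_dist_le hYX hYZ hXZ
  refine ⟨_, hS.wbtw.eq_add_dist_div_dist_smul_sub hS.left_ne, ?_⟩
  rw [dist_comm X, hYX, hYZ, dist_comm y x]
  exact h.wbtw.eq_add_dist_div_dist_smul_sub h.left_ne

end StrictConvex

section Euclidean

variable {V P : Type*} [NormedAddCommGroup V] [InnerProductSpace ℝ V] [MetricSpace P]
  [NormedAddTorsor V P] {W Q : Type*} [NormedAddCommGroup W] [InnerProductSpace ℝ W]
  [MetricSpace Q] [NormedAddTorsor W Q]

theorem dist_eq_of_sbtw_of_dist_le {X O Z Y : P} {x o z y : Q} (hS : Sbtw ℝ X O Z)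
    (hs : Sbtw ℝ x o z) (hOX : dist O X = dist o x) (hOZ : dist O Z = dist o z)
    (hOY : dist O Y = dist o y) (hXY : dist x y ≤ dist X Y) (hZY : dist z y ≤ dist Z Y) :
    dist X Y = dist x y := by
  have hS' := EuclideanGeometry.dist_sq_mul_dist_add_dist_sq_mul_dist Y X Z O hS.angle₁₂₃_eq_pi
  have hs' := EuclideanGeometry.dist_sq_mul_dist_add_dist_sq_mul_dist y x z o hs.angle₁₂₃_eq_pi
  rw [← hS.wbtw.dist_add_dist] at hS'
  rw [← hs.wbtw.dist_add_dist] at hs'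
  simp only [dist_comm _ O, dist_comm _ o, dist_comm Y, dist_comm y, hOX, hOZ, hOY] at hS' hs'
  have hox : 0 < dist o x := dist_pos.2 hs.ne_left
  have hoz : 0 < dist o z := dist_pos.2 hs.ne_right
  have hXY₂ := pow_le_pow_left₀ dist_nonneg hXY 2
  have hZY₂ := pow_le_pow_left₀ dist_nonneg hZY 2
  refine (pow_left_inj₀ dist_nonneg dist_nonneg two_ne_zero).1 ?_
  nlinarith

theorem dist_eq_of_eq_sum_smul {ι κ : Type*} [Fintype κ] {a : κ → V} {b : κ → W}
    (hab : ∀ k l, dist (a k) (a l) = dist (b k) (b l)) {w : ι → κ → ℝ}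
    (hw : ∀ i, ∑ k, w i k = 1) {A : ι → V} {B : ι → W} (hA : ∀ i, A i = ∑ k, w i k • a k)
    (hB : ∀ i, B i = ∑ k, w i k • b k) (i j : ι) : dist (A i) (A j) = dist (B i) (B j) := by
  have ha := EuclideanGeometry.dist_affineCombination a (hw i) (hw j)
  have hb := EuclideanGeometry.dist_affineCombination b (hw i) (hw j)
  simp only [hab, Finset.affineCombination_eq_linear_combination _ _ _ (hw _)] at ha hb
  rw [hA, hA, hB, hB]
  exact (mul_self_inj dist_nonneg dist_nonneg).1 (ha.trans hb.symm)

end Euclidean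

theorem key_configuration_rigidity_general
    {H : Type*} [NormedAddCommGroup H] [InnerProductSpace ℝ H]
    (pt qt xt pt0 ptplus qt0 qtplus : EuclideanSpace ℝ (Fin 2))
    (hp0 : pt0 ∈ segment ℝ pt ptplus) (hpplus : ptplus ∈ segment ℝ pt0 xt)
    (hpdist : [pt, pt0, ptplus, xt].Pairwise (· ≠ ·))
    (hq0 : qt0 ∈ segment ℝ qt qtplus) (hqplus : qtplus ∈ segment ℝ qt0 xt)
    (hqdist : [qt, qt0, qtplus, xt].Pairwise (· ≠ ·))
    (Pminus P0 Pplus Xp Qminus Q0 Qplus Xq : H)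
    (A : Fin 8 → H) (hA : A = ![Pminus, P0, Pplus, Xp, Qminus, Q0, Qplus, Xq])
    (m : Fin 8 → EuclideanSpace ℝ (Fin 2))
    (hm : m = ![pt, pt0, ptplus, xt, qt, qt0, qtplus, xt])
    (hcenter : ‖P0 - Q0‖ = dist pt0 qt0)
    (hP1 : ‖P0 - Pminus‖ = dist pt0 pt) (hP2 : ‖P0 - Pplus‖ = dist pt0 ptplus)
    (hP3 : ‖P0 - Xp‖ = dist pt0 xt)
    (hQ1 : ‖Q0 - Qminus‖ = dist qt0 qt) (hQ2 : ‖Q0 - Qplus‖ = dist qt0 qtplus)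
    (hQ3 : ‖Q0 - Xq‖ = dist qt0 xt)
    (hge : ∀ i j : Fin 8, dist (m i) (m j) ≤ ‖A i - A j‖) :
    (∀ i j : Fin 8, ‖A i - A j‖ = dist (m i) (m j)) ∧ Xp = Xq := by
  obtain ⟨hp, hpx⟩ := sbtw_of_mem_segment_of_mem_segment hp0 hpplus hpdist
  obtain ⟨hq, hqx⟩ := sbtw_of_mem_segment_of_mem_segment hq0 hqplus hqdist
  simp only [← dist_eq_norm] at hcenter hP1 hP2 hP3 hQ1 hQ2 hQ3 hge
  rw [hA, hm] at hge
  obtain ⟨r, hPplus, hptplus⟩ := hp.exists_eq_add_smul_sub_of_dist_le hP1 hP2 (hge 0 2)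
  obtain ⟨t, hXp, hxtp⟩ := hpx.exists_eq_add_smul_sub_of_dist_le hP1 hP3 (hge 0 3)
  obtain ⟨r', hQplus, hqtplus⟩ := hq.exists_eq_add_smul_sub_of_dist_le hQ1 hQ2 (hge 4 6)
  obtain ⟨t', hXq, hxtq⟩ := hqx.exists_eq_add_smul_sub_of_dist_le hQ1 hQ3 (hge 4 7)
  have hP := hp.sbtw_of_dist_eq_of_dist_le hP1 hP2 (hge 0 2)
  have hQ := hq.sbtw_of_dist_eq_of_dist_le hQ1 hQ2 (hge 4 6)
  have hPmQ0 : dist Pminus Q0 = dist pt qt0 :=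
    dist_eq_of_sbtw_of_dist_le hP hp hP1 hP2 hcenter (hge 0 5) (hge 2 5)
  have hQmP0 : dist Qminus P0 = dist qt pt0 := dist_eq_of_sbtw_of_dist_le hQ hq hQ1 hQ2
    (by rw [dist_comm, hcenter, dist_comm]) (hge 4 1) (hge 6 1)
  have hQmPm : dist Qminus Pminus = dist qt pt := dist_eq_of_sbtw_of_dist_le hQ hq hQ1 hQ2
    (by rw [dist_comm, hPmQ0, dist_comm]) (hge 4 0) (hge 6 0)
  set a : Fin 4 → H := ![Pminus, P0, Q0, Qminus]
  set b : Fin 4 → EuclideanSpace ℝ (Fin 2) := ![pt, pt0, qt0, qt]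
  have hab : ∀ k l, dist (a k) (a l) = dist (b k) (b l) := by
    intro k l
    fin_cases k <;> fin_cases l <;> simp only [a, b, Fin.zero_eta, Fin.mk_one, Fin.reduceFinMk,
      Matrix.cons_val, Matrix.cons_val_zero, Matrix.cons_val_one] <;> grind [dist_comm, dist_self]
  set w : Fin 8 → Fin 4 → ℝ := ![![1, 0, 0, 0], ![0, 1, 0, 0], ![-r, 1 + r, 0, 0],
    ![-t, 1 + t, 0, 0], ![0, 0, 0, 1], ![0, 0, 1, 0], ![0, 0, 1 + r', -r'], ![0, 0, 1 + t', -t']]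
  have hw : ∀ i, ∑ k, w i k = 1 := fun i => by fin_cases i <;> simp [w, Fin.sum_univ_four]
  have hAw : ∀ i, A i = ∑ k, w i k • a k := by
    intro i
    rw [hA]
    fin_cases i <;> simp only [a, w, Fin.sum_univ_four, Fin.zero_eta, Fin.mk_one, Fin.reduceFinMk,
      Matrix.cons_val, Matrix.cons_val_zero, Matrix.cons_val_one, hPplus, hXp, hQplus, hXq] <;>
      module
  have hmw : ∀ i, m i = ∑ k, w i k • b k := by
    intro i
    rw [hm]
    fin_cases i <;> simp only [b, w, Fin.sum_univ_four, Fin.zero_eta, Fin.mk_one, Fin.reduceFinMk,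
      Matrix.cons_val, Matrix.cons_val_zero, Matrix.cons_val_one]
    exacts [by module, by module, by rw [hptplus]; module, by rw [hxtp]; module, by module,
      by module, by rw [hqtplus]; module, by rw [hxtq]; module]
  have hdist := dist_eq_of_eq_sum_smul hab hw hAw hmw
  refine ⟨fun i j => by rw [← dist_eq_norm, hdist], ?_⟩
  simpa [hA, hm] using hdist 3 7

/-- The configuration rigidity in the key lemma: `pt, qt, xt` are affinely independent
points of the Euclidean plane, `pt0, ptplus` lie on `[pt, xt]` in the order `pt, pt0, ptplus, xt`
(pairwise distinct) and `qt0, qtplus` lie on `[qt, xt]` in the order `qt, qt0, qtplus, xt`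
(pairwise distinct).  The eight points `A 0, …, A 7 = Pminus, P0, Pplus, x̂_p, Qminus, Q0, Qplus, Xq`
of a real Hilbert space `H` have model points `m 0, …, m 7 = pt, pt0, ptplus, xt, qt, qt0, qtplus, xt`.
If `‖P0 - Q0‖`, the distances from `P0` to `Pminus, Pplus, x̂_p` and the distances from
`Q0` to `Qminus, Qplus, Xq` equal the corresponding model distances, and every pairwise
distance among the eight points is at least the corresponding model distance, then every
pairwise distance equals the model one; in particular `x̂_p = Xq`. -/
theorem key_configuration_rigidity
    {H : Type*} [NormedAddCommGroup H] [InnerProductSpace ℝ H] [CompleteSpace H]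
    (pt qt xt pt0 ptplus qt0 qtplus : EuclideanSpace ℝ (Fin 2))
    (hindep : AffineIndependent ℝ ![pt, qt, xt])
    (hp0 : pt0 ∈ segment ℝ pt ptplus) (hpplus : ptplus ∈ segment ℝ pt0 xt)
    (hpdist : [pt, pt0, ptplus, xt].Pairwise (· ≠ ·))
    (hq0 : qt0 ∈ segment ℝ qt qtplus) (hqplus : qtplus ∈ segment ℝ qt0 xt)
    (hqdist : [qt, qt0, qtplus, xt].Pairwise (· ≠ ·))
    (Pminus P0 Pplus Xp Qminus Q0 Qplus Xq : H)
    (A : Fin 8 → H) (hA : A = ![Pminus, P0, Pplus, Xp, Qminus, Q0, Qplus, Xq])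
    (m : Fin 8 → EuclideanSpace ℝ (Fin 2))
    (hm : m = ![pt, pt0, ptplus, xt, qt, qt0, qtplus, xt])
    (hcenter : ‖P0 - Q0‖ = dist pt0 qt0)
    (hP1 : ‖P0 - Pminus‖ = dist pt0 pt) (hP2 : ‖P0 - Pplus‖ = dist pt0 ptplus)
    (hP3 : ‖P0 - Xp‖ = dist pt0 xt)
    (hQ1 : ‖Q0 - Qminus‖ = dist qt0 qt) (hQ2 : ‖Q0 - Qplus‖ = dist qt0 qtplus)
    (hQ3 : ‖Q0 - Xq‖ = dist qt0 xt)
    (hge : ∀ i j : Fin 8, dist (m i) (m j) ≤ ‖A i - A j‖) :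
    (∀ i j : Fin 8, ‖A i - A j‖ = dist (m i) (m j)) ∧ Xp = Xq :=
  key_configuration_rigidity_general pt qt xt pt0 ptplus qt0 qtplus hp0 hpplus hpdist hq0 hqplus
    hqdist Pminus P0 Pplus Xp Qminus Q0 Qplus Xq A hA m hm hcenter hP1 hP2 hP3 hQ1 hQ2 hQ3 hge
end
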